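/- Let V be a Hilbert space, A: V → V* bounded (C_b) and coercive (C_a), 𝒦 ⊂ V a closed convex cone, and L: V → V Lipschitz with constant C_L < C_a/C_b. For d ∈ V*, let α(d) denote the unique solution of the QVI: α ∈ L(α) + 𝒦, ⟨Aα − d, α − v⟩ ≤ 0 for all v ∈ L(α) + 𝒦. Then the map d ↦ α(d) is continuous from V* to V; in fact, if d_j → d in V*, then ‖α(d_j) − α(d_k)‖_V ≤ (1 + C_L) ‖d_j − d_k‖_{V*} / (C_a − C_b C_L) for all j,k, so α(d_j) → α(d) strongly in V. -/

import Mathlib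

/-!
Write `z = u - L u`, so that `u ∈ L u + K` reads `z ∈ K`. Testing the QVI of `d₁` with
`v = z₂ + L u₁` and that of `d₂` with `v = z₁ + L u₂` and adding gives
`⟨A(u₁ - u₂) - (d₁ - d₂), z₁ - z₂⟩ ≤ 0`. Since `z₁ - z₂ = e - w` with `e = u₁ - u₂` and
`‖w‖ = ‖L u₁ - L u₂‖ ≤ C_L ‖e‖`, coercivity and boundedness of `A` give
`(C_a - C_b C_L) ‖e‖² ≤ (1 + C_L) ‖d₁ - d₂‖ ‖e‖`. The solution map is thus Lipschitz, hence continuous.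
-/

open Filter Topology

theorem nonneg_of_norm_sub_le_mul {E F : Type*} [NormedAddCommGroup E] [Nontrivial E]
    [SeminormedAddCommGroup F] {f : E → F} {C : ℝ}
    (hf : ∀ x y, ‖f x - f y‖ ≤ C * ‖x - y‖) : 0 ≤ C := by
  obtain ⟨x, hx⟩ := exists_ne (0 : E)
  have := hf x 0
  have hx' : 0 < ‖x - 0‖ := by simpa using hx
  nlinarith [norm_nonneg (f x - f 0)]

theorem le_div_of_mul_sq_le_mul {a b x : ℝ} (ha : 0 < a) (hb : 0 ≤ b) (hx : 0 ≤ x)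
    (h : a * x ^ 2 ≤ b * x) : x ≤ b / a := by
  rcases hx.eq_or_lt with rfl | hx
  · positivity
  · rw [le_div_iff₀ ha]
    nlinarith

section QVI

variable {V : Type*} [NormedAddCommGroup V] [NormedSpace ℝ V]

def IsQVISolution (A : V →L[ℝ] V →L[ℝ] ℝ) (K : Set V) (L : V → V) (d : V →L[ℝ] ℝ) (u : V) :
    Prop :=
  u - L u ∈ K ∧ ∀ v : V, v - L u ∈ K → (A u - d) (u - v) ≤ 0

namespace IsQVISolution

variable {A : V →L[ℝ] V →L[ℝ] ℝ} {K : Set V} {L : V → V} {d₁ d₂ : V →L[ℝ] ℝ} {u₁ u₂ : V}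

theorem apply_sub_le (h₁ : IsQVISolution A K L d₁ u₁) (h₂ : IsQVISolution A K L d₂ u₂) :
    A (u₁ - u₂) (u₁ - u₂ - (L u₁ - L u₂)) ≤ (d₁ - d₂) (u₁ - u₂ - (L u₁ - L u₂)) := by
  have test₁ := h₁.2 (u₂ - L u₂ + L u₁) (by simpa using h₂.1)
  have test₂ := h₂.2 (u₁ - L u₁ + L u₂) (by simpa using h₁.1)
  have hz : u₁ - u₂ - (L u₁ - L u₂) = u₁ - (u₂ - L u₂ + L u₁) := by abel
  have hz' : u₂ - (u₁ - L u₁ + L u₂) = -(u₁ - u₂ - (L u₁ - L u₂)) := by abel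
  rw [← hz] at test₁
  rw [hz', map_neg] at test₂
  simp only [map_sub, sub_apply] at test₁ test₂ ⊢
  linarith

theorem norm_sub_le_of_nonneg (h₁ : IsQVISolution A K L d₁ u₁) (h₂ : IsQVISolution A K L d₂ u₂)
    {Ca Cb CL : ℝ} (hbound : ∀ u v : V, A u v ≤ Cb * ‖u‖ * ‖v‖)
    (hcoerc : ∀ u : V, Ca * ‖u‖ ^ 2 ≤ A u u) (hLlip : ∀ u v : V, ‖L u - L v‖ ≤ CL * ‖u - v‖)
    (hCb : 0 ≤ Cb) (hCL₀ : 0 ≤ CL) (hCL : Cb * CL < Ca) :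
    ‖u₁ - u₂‖ ≤ (1 + CL) * ‖d₁ - d₂‖ / (Ca - Cb * CL) := by
  set e := u₁ - u₂
  set w := L u₁ - L u₂
  set δ := d₁ - d₂
  have hw : ‖w‖ ≤ CL * ‖e‖ := hLlip u₁ u₂
  have hδ : δ (e - w) ≤ ‖δ‖ * (‖e‖ + ‖w‖) :=
    calc δ (e - w) ≤ ‖δ‖ * ‖e - w‖ := (Real.le_norm_self _).trans (δ.le_opNorm _)
      _ ≤ ‖δ‖ * (‖e‖ + ‖w‖) := by gcongr; exact norm_sub_le e w
  have hsplit : A e e = A e (e - w) + A e w := by rw [← map_add, sub_add_cancel]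
  have hmain : (Ca - Cb * CL) * ‖e‖ ^ 2 ≤ ((1 + CL) * ‖δ‖) * ‖e‖ :=
    calc (Ca - Cb * CL) * ‖e‖ ^ 2 ≤ A e e - Cb * ‖e‖ * (CL * ‖e‖) := by nlinarith [hcoerc e]
      _ ≤ δ (e - w) + Cb * ‖e‖ * ‖w‖ - Cb * ‖e‖ * (CL * ‖e‖) := by
          have := h₁.apply_sub_le h₂
          nlinarith [hbound e w]
      _ ≤ ((1 + CL) * ‖δ‖) * ‖e‖ := by
          have hCbw : Cb * ‖e‖ * ‖w‖ ≤ Cb * ‖e‖ * (CL * ‖e‖) := by gcongr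
          nlinarith [mul_le_mul_of_nonneg_left hw (norm_nonneg δ)]
  exact le_div_of_mul_sq_le_mul (by linarith) (by positivity) (norm_nonneg e) hmain

theorem norm_sub_le (h₁ : IsQVISolution A K L d₁ u₁) (h₂ : IsQVISolution A K L d₂ u₂)
    {Ca Cb CL : ℝ} (hbound : ∀ u v : V, A u v ≤ Cb * ‖u‖ * ‖v‖)
    (hcoerc : ∀ u : V, Ca * ‖u‖ ^ 2 ≤ A u u) (hLlip : ∀ u v : V, ‖L u - L v‖ ≤ CL * ‖u - v‖)
    (hCb : 0 < Cb) (hCL : CL < Ca / Cb) :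
    ‖u₁ - u₂‖ ≤ (1 + CL) * ‖d₁ - d₂‖ / (Ca - Cb * CL) := by
  rcases subsingleton_or_nontrivial V with hV | hV
  · simp [Subsingleton.elim u₁ u₂, Subsingleton.elim d₁ d₂]
  · -- on a nontrivial space the Lipschitz bound forces `0 ≤ C_L`
    have hCL' : Cb * CL < Ca := by rw [lt_div_iff₀ hCb] at hCL; linarith
    exact h₁.norm_sub_le_of_nonneg h₂ hbound hcoerc hLlip hCb.le
      (nonneg_of_norm_sub_le_mul hLlip) hCL'

end IsQVISolution

end QVI

theorem qvi_derivative_continuity_general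
    {V : Type*} [NormedAddCommGroup V] [InnerProductSpace ℝ V]
    (A : V →L[ℝ] V →L[ℝ] ℝ) (Ca Cb : ℝ) (hCb : 0 < Cb)
    (hbound : ∀ u v : V, A u v ≤ Cb * ‖u‖ * ‖v‖)
    (hcoerc : ∀ u : V, Ca * ‖u‖ ^ 2 ≤ A u u)
    (K : Set V)
    (L : V → V) (CL : ℝ) (hCL : CL < Ca / Cb)
    (hLlip : ∀ u v : V, ‖L u - L v‖ ≤ CL * ‖u - v‖)
    (α : (V →L[ℝ] ℝ) → V)
    (hα : ∀ d : V →L[ℝ] ℝ, α d - L (α d) ∈ K ∧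
      ∀ v : V, v - L (α d) ∈ K → (A (α d) - d) (α d - v) ≤ 0) :
    (∀ d₁ d₂ : V →L[ℝ] ℝ,
      ‖α d₁ - α d₂‖ ≤ (1 + CL) * ‖d₁ - d₂‖ / (Ca - Cb * CL)) ∧
    (∀ (dseq : ℕ → (V →L[ℝ] ℝ)) (d : V →L[ℝ] ℝ),
      Tendsto dseq atTop (𝓝 d) →
      Tendsto (fun j => α (dseq j)) atTop (𝓝 (α d))) := by
  have hsol : ∀ d, IsQVISolution A K L d (α d) := hα
  have hest : ∀ d₁ d₂ : V →L[ℝ] ℝ,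
      ‖α d₁ - α d₂‖ ≤ (1 + CL) * ‖d₁ - d₂‖ / (Ca - Cb * CL) := fun d₁ d₂ =>
    (hsol d₁).norm_sub_le (hsol d₂) hbound hcoerc hLlip hCb hCL
  have hlip : LipschitzWith (Real.toNNReal ((1 + CL) / (Ca - Cb * CL))) α :=
    LipschitzWith.of_dist_le' fun d₁ d₂ => by
      simpa only [dist_eq_norm, mul_div_right_comm] using hest d₁ d₂
  exact ⟨hest, fun dseq d hd => (hlip.continuous.tendsto d).comp hd⟩

/-- continuity of the directional-derivative QVI solution map
`d ↦ α(d)`, with the explicit Lipschitz-type estimate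
`‖α(d_j) − α(d_k)‖ ≤ (1 + C_L)‖d_j − d_k‖ / (C_a − C_b C_L)`. -/
theorem qvi_derivative_continuity
    {V : Type*} [NormedAddCommGroup V] [InnerProductSpace ℝ V] [CompleteSpace V]
    (A : V →L[ℝ] V →L[ℝ] ℝ) (Ca Cb : ℝ) (hCa : 0 < Ca) (hCb : 0 < Cb)
    (hbound : ∀ u v : V, A u v ≤ Cb * ‖u‖ * ‖v‖)
    (hcoerc : ∀ u : V, Ca * ‖u‖ ^ 2 ≤ A u u)
    (K : Set V) (hKclosed : IsClosed K) (hKconvex : Convex ℝ K)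
    (hKcone : ∀ (c : ℝ) (x : V), 0 ≤ c → x ∈ K → c • x ∈ K)
    (L : V → V) (CL : ℝ) (hCL : CL < Ca / Cb)
    (hLlip : ∀ u v : V, ‖L u - L v‖ ≤ CL * ‖u - v‖)
    (α : (V →L[ℝ] ℝ) → V)
    (hα : ∀ d : V →L[ℝ] ℝ, α d - L (α d) ∈ K ∧
      ∀ v : V, v - L (α d) ∈ K → (A (α d) - d) (α d - v) ≤ 0) :
    (∀ d₁ d₂ : V →L[ℝ] ℝ,
      ‖α d₁ - α d₂‖ ≤ (1 + CL) * ‖d₁ - d₂‖ / (Ca - Cb * CL)) ∧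
    (∀ (dseq : ℕ → (V →L[ℝ] ℝ)) (d : V →L[ℝ] ℝ),
      Tendsto dseq atTop (𝓝 d) →
      Tendsto (fun j => α (dseq j)) atTop (𝓝 (α d))) :=
  qvi_derivative_continuity_general A Ca Cb hCb hbound hcoerc K L CL hCL hLlip α hα
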